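/- A signed multiset μ : α × Bool →₀ ℕ belongs to Func if and only if either μ = Finsupp.single (a, false) 1 for some a : α, or there exist a b : α with μ (a, false) > 0 and μ (b, true) > 0. (In a free compact closed category, the characterization of functional types is the same as in the pivotal case: a type is functional iff it is a basic type, or has at least one occurrence with exponent +1 and at least one with exponent −1.) -/

import Mathlib

/-- The dual of a signed multiset: negate every sign, `swap μ (a, b) = μ (a, !b)`. -/
def swapDual {α : Type*} (μ : α × Bool →₀ ℕ) : α × Bool →₀ ℕ :=
  Finsupp.equivMapDomain
    (Equiv.prodCongr (Equiv.refl α) ⟨Bool.not, Bool.not, Bool.not_not, Bool.not_not⟩) μ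

/-- Functional types in the free compact closed category on `α`, modelled as signed
multisets `α × Bool →₀ ℕ`: the smallest set containing `Finsupp.single (a, false) 1`
for every `a : α`, closed under `(u, v) ↦ u + swapDual v`. -/
inductive Func {α : Type*} : (α × Bool →₀ ℕ) → Prop
  | base (a : α) : Func (Finsupp.single (a, false) 1)
  | comb {u v : α × Bool →₀ ℕ} : Func u → Func v → Func (u + swapDual v)

/-!
A functional type always has a positive occurrence, so `u + swapDual v` has a positive one
(from `u`) and a negative one (from `v`). Conversely, since `Func w` gives
`Func (w + single (x, true) 1)` (take `v = single (x, false) 1`), any functional type can be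
padded with arbitrary negative occurrences. Given `μ` with a positive occurrence `a` and a
negative occurrence `c`, split the rest `ρ` of `μ` into its negative part `ρ⁻` and positive
part `ρ⁺`; then `μ = (a + ρ⁻) + swapDual (c + swapDual ρ⁺)`, where both summands are padded
generators.
-/

lemma Finsupp.exists_eq_single_add {ι : Type*} {μ : ι →₀ ℕ} {p : ι} (hp : 0 < μ p) :
    ∃ ν, μ = Finsupp.single p 1 + ν :=
  ⟨_, (add_tsub_cancel_of_le (Finsupp.single_le_iff.2 hp)).symm⟩

section

variable {α : Type*}

@[simp]
lemma swapDual_apply (μ : α × Bool →₀ ℕ) (a : α) (b : Bool) :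
    swapDual μ (a, b) = μ (a, !b) := rfl

lemma swapDual_add (u v : α × Bool →₀ ℕ) : swapDual (u + v) = swapDual u + swapDual v := by
  ext ⟨a, b⟩
  simp

lemma swapDual_swapDual (μ : α × Bool →₀ ℕ) : swapDual (swapDual μ) = μ := by
  ext ⟨a, b⟩
  simp

lemma swapDual_single (x : α) (c : Bool) (n : ℕ) :
    swapDual (Finsupp.single (x, c) n) = Finsupp.single (x, !c) n :=
  Finsupp.equivMapDomain_single _ _ _

namespace Func

lemma exists_pos_false {μ : α × Bool →₀ ℕ} (h : Func μ) : ∃ a, 0 < μ (a, false) := by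
  induction h with
  | base a => exact ⟨a, by simp⟩
  | comb _ _ ihu _ =>
    obtain ⟨a, ha⟩ := ihu
    exact ⟨a, by simp only [Finsupp.add_apply]; omega⟩

lemma add_single_true {w : α × Bool →₀ ℕ} (h : Func w) (x : α) (n : ℕ) :
    Func (w + Finsupp.single (x, true) n) := by
  induction n with
  | zero => simpa using h
  | succ n ih =>
    have := ih.comb (base x)
    rwa [swapDual_single, Bool.not_false, add_assoc, ← Finsupp.single_add] at this

lemma add_of_forall_false_eq_zero {w T : α × Bool →₀ ℕ} (h : Func w)
    (hT : ∀ y, T (y, false) = 0) : Func (w + T) := by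
  induction T using Finsupp.induction_linear generalizing w with
  | zero => simpa using h
  | add f g ihf ihg =>
    have hfg : ∀ y, f (y, false) = 0 ∧ g (y, false) = 0 := fun y => by
      simpa using hT y
    rw [← add_assoc]
    exact ihg (ihf h fun y => (hfg y).1) fun y => (hfg y).2
  | single p n =>
    obtain ⟨x, _ | _⟩ := p
    · obtain rfl : n = 0 := by simpa using hT x
      simpa using h
    · exact h.add_single_true x n

end Func

end

/-- Characterization of functional types in a free compact closed category: a signed
multiset is functional iff it is a single generator, or it has at least one occurrence
with exponent `+1` and at least one with exponent `−1`. -/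
theorem func_iff {α : Type*} (μ : α × Bool →₀ ℕ) :
    Func μ ↔ (∃ a : α, μ = Finsupp.single (a, false) 1) ∨
      (∃ a b : α, 0 < μ (a, false) ∧ 0 < μ (b, true)) := by
  constructor
  · rintro (a | @⟨u, v, hu, hv⟩)
    · exact Or.inl ⟨a, rfl⟩
    · obtain ⟨a, ha⟩ := hu.exists_pos_false
      obtain ⟨b, hb⟩ := hv.exists_pos_false
      exact Or.inr ⟨a, b, by simp only [Finsupp.add_apply]; omega,
        by simp only [Finsupp.add_apply, swapDual_apply, Bool.not_true]; omega⟩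
  · rintro (⟨a, rfl⟩ | ⟨a, c, ha, hc⟩)
    · exact Func.base a
    classical
    obtain ⟨μ', rfl⟩ := Finsupp.exists_eq_single_add ha
    obtain ⟨ρ, rfl⟩ := Finsupp.exists_eq_single_add (p := (c, true)) (by simpa using hc)
    have hμ : Finsupp.single (a, false) 1 + (Finsupp.single (c, true) 1 + ρ) =
        (Finsupp.single (a, false) 1 + ρ.filter (·.2 = true)) +
          swapDual (Finsupp.single (c, false) 1 + swapDual (ρ.filter (¬ ·.2 = true))) := by
      rw [swapDual_add, swapDual_single, swapDual_swapDual, Bool.not_false]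
      conv_lhs => rw [← Finsupp.filter_add_filter_not ρ (·.2 = true)]
      abel
    rw [hμ]
    exact ((Func.base a).add_of_forall_false_eq_zero fun y => by simp).comb
      ((Func.base c).add_of_forall_false_eq_zero fun y => by simp)
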